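/- Let (X, 𝓑, μ, f) be a dissipative system of bounded distortion generated by W, with f bijective and both f and f⁻¹ satisfying condition (⋆), let 1 ≤ p < ∞, and let H be the constant from the generalized bounded distortion inequality (◇◇). Define weights w_k = (μ(f^{k−1}(W))/μ(f^k(W)))^{1/p} for k ∈ ℤ. Then (w_k) is bounded with inf_{k∈ℤ} w_k > 0, so the bilateral weighted backward shift B_w on ℓ^p(ℤ) is a well-defined invertible operator, and there exists a continuous linear surjection Π : L^p(X, μ) → ℓ^p(ℤ), given by (Π φ)_k = (μ(f^k(W))^{1/p}/μ(W)) ∫_W φ ∘ f^k dμ, satisfying ‖Π‖ ≤ H^{1/p}, Π ∘ T_f = B_w ∘ Π, and for every x ∈ ℓ^p(ℤ) there exists φ ∈ L^p(X, μ) with Π(φ) = x and ‖φ‖_p ≤ ‖x‖_p (i.e., Π admits a bounded selector with L = 1). -/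

import Mathlib

/-!
The pieces `fᵏ W` partition `X`, and `(Π φ)ₖ` is, up to the factor `μ(fᵏ W)^{1/p}`, the mean over
`W` of `φ ∘ fᵏ`. Bounded distortion (`(◇◇)` with `r = -k`, `s = k`) says that pushing `μ|_W`
forward by `fᵏ` gives at most `H μ(W) / μ(fᵏ W)` times `μ|_{fᵏ W}`; with Jensen's inequality on `W`
this yields `|(Π φ)ₖ|^p ≤ H ∫_{fᵏ W} |φ|^p`, and summing over `k` gives `‖Π‖ ≤ H^{1/p}`.
Composing with `f` moves the mean from `fᵏ⁺¹ W` to `fᵏ W`, which is the backward shift with weights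
`wₖ = (μ(fᵏ⁻¹ W) / μ(fᵏ W))^{1/p}`; condition `(⋆)` for `f` and `f⁻¹` bounds these above and away
from `0`. Conversely, the function equal to `xₖ / μ(fᵏ W)^{1/p}` on each piece is sent to `x`
and has the same norm as `x`.
-/

open MeasureTheory Filter Set Function Topology ENNReal

noncomputable section

namespace GHShadow

/-- The shadowing property for an invertible bounded linear operator. -/
def HasShadowing {E : Type*} [NormedAddCommGroup E] [NormedSpace ℝ E]
    (T : E ≃L[ℝ] E) : Prop :=
  ∀ ε : ℝ, 0 < ε → ∃ δ : ℝ, 0 < δ ∧ ∀ x : ℤ → E,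
    (∀ n : ℤ, ‖T (x n) - x (n + 1)‖ ≤ δ) →
      ∃ y : E, ∀ n : ℤ, ‖(T ^ n) y - x n‖ < ε

/-- `lim ‖Tⁿ‖^{1/n}` exists and is `< 1`. -/
def SpectralRadiusLtOne {E : Type*} [NormedAddCommGroup E] [NormedSpace ℝ E]
    (T : E →L[ℝ] E) : Prop :=
  ∃ r : ℝ, r < 1 ∧ Tendsto (fun n : ℕ => ‖T ^ n‖ ^ (1 / (n : ℝ))) atTop (nhds r)

/-- The restriction of `T` to `M` has spectral radius `< 1`
(equivalently, is a proper contraction in an equivalent norm). -/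
def ContractsOn {E : Type*} [NormedAddCommGroup E] [NormedSpace ℝ E]
    (T : E ≃L[ℝ] E) (M : Submodule ℝ E) : Prop :=
  ∃ C : ℝ, 0 < C ∧ ∃ t : ℝ, 0 < t ∧ t < 1 ∧
    ∀ n : ℕ, ∀ x ∈ M, ‖(T ^ n) x‖ ≤ C * t ^ n * ‖x‖

def GeneralizedHyperbolic {E : Type*} [NormedAddCommGroup E] [NormedSpace ℝ E]
    (T : E ≃L[ℝ] E) : Prop :=
  ∃ M N : Submodule ℝ E, IsClosed (M : Set E) ∧ IsClosed (N : Set E) ∧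
    IsCompl M N ∧ (∀ x ∈ M, T x ∈ M) ∧ (∀ x ∈ N, T.symm x ∈ N) ∧
    ContractsOn T M ∧ ContractsOn T.symm N

variable {X : Type*} [MeasurableSpace X]

/-- image of `B` under the `k`-th iterate of the invertible map `f`. -/
def img (f : Equiv.Perm X) (k : ℤ) (B : Set X) : Set X := ⇑(f ^ k) '' B

/-- `(X, 𝓑, μ, f)` is a dissipative system generated by `W`. -/
structure IsDissipative (μ : Measure X) (f : Equiv.Perm X) (W : Set X) : Prop where
  sigmaFin : SigmaFinite μ
  meas_f : Measurable f
  meas_symm : Measurable f.symm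
  meas_W : MeasurableSet W
  pos : 0 < μ W
  fin : μ W < ⊤
  disj : Pairwise fun k l : ℤ => Disjoint (img f k W) (img f l W)
  cover : (⋃ k : ℤ, img f k W) = univ

/-- `f` is of bounded distortion on `W` with constant `K`. -/
def BoundedDistortion (μ : Measure X) (f : Equiv.Perm X) (W : Set X) (K : ℝ≥0∞) : Prop :=
  ∀ k : ℤ, ∀ B : Set X, MeasurableSet B → B ⊆ W →
    (1 / K) * (μ (img f k W) * μ B) ≤ μ (img f k B) * μ W ∧
      μ (img f k B) * μ W ≤ K * (μ (img f k W) * μ B)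

/-- condition (⋆) for a transformation `g`. -/
def CondStar (μ : Measure X) (g : X → X) : Prop :=
  ∃ c : ℝ≥0∞, 0 < c ∧ c ≠ ⊤ ∧ ∀ B : Set X, MeasurableSet B → μ (g ⁻¹' B) ≤ c * μ B

/-- condition 𝓗𝓒. -/
def CondHC (μ : Measure X) (f : Equiv.Perm X) (W : Set X) : Prop :=
  limsup (fun n : ℕ =>
    ⨆ k : ℤ, (μ (img f k W) / μ (img f (k + (n : ℤ)) W)) ^ (1 / (n : ℝ))) atTop < 1

/-- condition 𝓗𝓓. -/
def CondHD (μ : Measure X) (f : Equiv.Perm X) (W : Set X) : Prop :=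
  1 < liminf (fun n : ℕ =>
    ⨅ k : ℤ, (μ (img f k W) / μ (img f (k + (n : ℤ)) W)) ^ (1 / (n : ℝ))) atTop

/-- condition 𝓖𝓗. -/
def CondGH (μ : Measure X) (f : Equiv.Perm X) (W : Set X) : Prop :=
  limsup (fun n : ℕ =>
      ⨆ m : ℕ, (μ (img f (-(m : ℤ) - (n : ℤ)) W) / μ (img f (-(m : ℤ)) W)) ^ (1 / (n : ℝ)))
      atTop < 1 ∧
  1 < liminf (fun n : ℕ =>
      ⨅ m : ℕ, (μ (img f (m : ℤ) W) / μ (img f ((m : ℤ) + (n : ℤ)) W)) ^ (1 / (n : ℝ))) atTop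

/-- `T` represents the composition operator `φ ↦ φ ∘ f` on `L^p(X,μ)`. -/
def RepsComp (μ : Measure X) (p : ℝ≥0∞) [Fact (1 ≤ p)] (f : X → X)
    (T : Lp ℝ p μ ≃L[ℝ] Lp ℝ p μ) : Prop :=
  ∀ φ : Lp ℝ p μ, ⇑(T φ) =ᵐ[μ] fun x => (φ : X → ℝ) (f x)

/-- The weight sequence `w_k = (μ(f^{k-1}(W))/μ(f^k(W)))^{1/p}`. -/
def wseq {X : Type*} [MeasurableSpace X] (μ : Measure X) (f : Equiv.Perm X)
    (W : Set X) (p : ℝ≥0∞) (k : ℤ) : ℝ :=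
  ((μ (img f (k - 1) W) / μ (img f k W)) ^ (1 / p.toReal)).toReal

section Images

variable {α : Type*} {f : Equiv.Perm α}

lemma img_eq_preimage (k : ℤ) (B : Set α) : img f k B = ⇑(f ^ (-k)) ⁻¹' B := by
  rw [img, Equiv.image_eq_preimage_symm, zpow_neg, Equiv.Perm.inv_def]

lemma preimage_img (k : ℤ) (B : Set α) : ⇑f ⁻¹' img f k B = img f (k - 1) B := by
  rw [img_eq_preimage, img_eq_preimage, neg_sub, sub_eq_neg_add, zpow_add_one,
    Equiv.Perm.coe_mul, preimage_comp]

lemma preimage_symm_img (k : ℤ) (B : Set α) : ⇑f.symm ⁻¹' img f k B = img f (k + 1) B := by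
  rw [img_eq_preimage, img_eq_preimage, neg_add, ← sub_eq_add_neg, zpow_sub_one,
    Equiv.Perm.coe_mul, Equiv.Perm.inv_def, preimage_comp]

lemma perm_zpow_add_one_apply (k : ℤ) (x : α) : (f ^ (k + 1)) x = f ((f ^ k) x) := by
  rw [add_comm, zpow_add, zpow_one, Equiv.Perm.mul_apply]

end Images

section Iterates

variable {μ : Measure X} {f : Equiv.Perm X}

lemma measurable_perm_zpow (hf : Measurable f) (hf' : Measurable f.symm) (k : ℤ) :
    Measurable ⇑(f ^ k) := by
  induction k using Int.induction_on with
  | zero => exact measurable_id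
  | succ n ih => rw [zpow_add_one, Equiv.Perm.coe_mul]; exact ih.comp hf
  | pred n ih => rw [zpow_sub_one, Equiv.Perm.coe_mul, Equiv.Perm.inv_def]; exact ih.comp hf'

lemma CondStar.comp {g h : X → X} (hg : Measurable g) (hgs : CondStar μ g)
    (hhs : CondStar μ h) : CondStar μ (g ∘ h) := by
  obtain ⟨c, hc0, hct, hc⟩ := hgs
  obtain ⟨d, hd0, hdt, hd⟩ := hhs
  refine ⟨d * c, ENNReal.mul_pos hd0.ne' hc0.ne', mul_ne_top hdt hct, fun B hB => ?_⟩
  calc μ (h ⁻¹' (g ⁻¹' B)) ≤ d * μ (g ⁻¹' B) := hd _ (hg hB)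
    _ ≤ d * (c * μ B) := by gcongr; exact hc B hB
    _ = d * c * μ B := (mul_assoc ..).symm

lemma condStar_perm_zpow (hf : Measurable f) (hf' : Measurable f.symm) (hs : CondStar μ f)
    (hs' : CondStar μ f.symm) (k : ℤ) : CondStar μ ⇑(f ^ k) := by
  induction k using Int.induction_on with
  | zero => exact ⟨1, one_pos, one_ne_top, fun B _ => by simp⟩
  | succ n ih =>
    rw [zpow_add_one, Equiv.Perm.coe_mul]
    exact ih.comp (measurable_perm_zpow hf hf' n) hs
  | pred n ih =>
    rw [zpow_sub_one, Equiv.Perm.coe_mul, Equiv.Perm.inv_def]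
    exact ih.comp (measurable_perm_zpow hf hf' _) hs'

lemma CondStar.quasiMeasurePreserving {g : X → X} (hg : Measurable g) (hgs : CondStar μ g) :
    Measure.QuasiMeasurePreserving g μ μ := by
  obtain ⟨c, -, -, hc⟩ := hgs
  refine ⟨hg, Measure.AbsolutelyContinuous.mk fun B hB hB0 => ?_⟩
  rw [Measure.map_apply hg hB]
  exact nonpos_iff_eq_zero.1 ((hc B hB).trans_eq (by rw [hB0, mul_zero]))

lemma measurableSet_img (hf : Measurable f) (hf' : Measurable f.symm) (k : ℤ) {B : Set X}
    (hB : MeasurableSet B) : MeasurableSet (img f k B) := by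
  rw [img_eq_preimage]
  exact measurable_perm_zpow hf hf' (-k) hB

lemma measure_img_ne_zero {k : ℤ} (hk : Measure.QuasiMeasurePreserving ⇑(f ^ k) μ μ)
    {B : Set X} (hB : μ B ≠ 0) : μ (img f k B) ≠ 0 := fun h0 =>
  hB (by simpa [img, Equiv.preimage_image] using hk.preimage_null h0)

lemma measure_img_ne_top {k : ℤ} (hk : CondStar μ ⇑(f ^ (-k))) {B : Set X}
    (hB : MeasurableSet B) (hBfin : μ B ≠ ⊤) : μ (img f k B) ≠ ⊤ := by
  obtain ⟨c, -, hct, hc⟩ := hk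
  rw [img_eq_preimage]
  exact ne_top_of_le_ne_top (mul_ne_top hct hBfin) (hc B hB)

end Iterates

section Distortion

variable {Y : Type*} [MeasurableSpace Y] {μ : Measure X} {ν : Measure Y} {g : X → Y}
  {W : Set X} {V : Set Y} {C : ℝ≥0∞}

lemma map_restrict_le_smul_restrict_image (hg : Measurable g) (hW : MeasurableSet W)
    (h : ∀ B ⊆ W, MeasurableSet B → μ B ≤ C * ν (g '' B)) :
    (μ.restrict W).map g ≤ C • ν.restrict (g '' W) := by
  refine Measure.le_iff.2 fun A hA => ?_
  rw [Measure.map_apply hg hA, Measure.restrict_apply (hg hA), Measure.smul_apply,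
    Measure.restrict_apply hA, smul_eq_mul]
  calc μ (g ⁻¹' A ∩ W) ≤ C * ν (g '' (g ⁻¹' A ∩ W)) :=
        h _ inter_subset_right ((hg hA).inter hW)
    _ ≤ C * ν (A ∩ g '' W) := by
        gcongr
        exact (image_inter_subset _ _ _).trans
          (inter_subset_inter_left _ (image_preimage_subset _ _))

lemma absolutelyContinuous_of_map_restrict_le (hmap : (μ.restrict W).map g ≤ C • ν.restrict V) :
    (μ.restrict W).map g ≪ ν :=
  (Measure.absolutelyContinuous_of_le_smul hmap).trans
    (Measure.absolutelyContinuous_of_le Measure.restrict_le_self)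

lemma setLIntegral_comp_le_of_map_restrict_le (hg : Measurable g)
    (hmap : (μ.restrict W).map g ≤ C • ν.restrict V) {F : Y → ℝ≥0∞} (hF : AEMeasurable F ν) :
    ∫⁻ x in W, F (g x) ∂μ ≤ C * ∫⁻ y in V, F y ∂ν := by
  rw [← lintegral_map' (hF.mono_ac (absolutelyContinuous_of_map_restrict_le hmap))
    hg.aemeasurable]
  calc ∫⁻ y, F y ∂(μ.restrict W).map g ≤ ∫⁻ y, F y ∂(C • ν.restrict V) :=
        lintegral_mono' hmap le_rfl
    _ = C * ∫⁻ y in V, F y ∂ν := lintegral_smul_measure _ _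

lemma aestronglyMeasurable_comp_of_map_restrict_le {E : Type*} [TopologicalSpace E] {φ : Y → E}
    (hφ : AEStronglyMeasurable φ ν) (hg : Measurable g)
    (hmap : (μ.restrict W).map g ≤ C • ν.restrict V) :
    AEStronglyMeasurable (φ ∘ g) (μ.restrict W) :=
  (hφ.mono_ac (absolutelyContinuous_of_map_restrict_le hmap)).comp_aemeasurable hg.aemeasurable

lemma memLp_comp_of_map_restrict_le {E : Type*} [NormedAddCommGroup E] {p : ℝ≥0∞} {φ : Y → E}
    (hφ : MemLp φ p ν) (hg : Measurable g) (hC : C ≠ ⊤)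
    (hmap : (μ.restrict W).map g ≤ C • ν.restrict V) :
    MemLp (φ ∘ g) p (μ.restrict W) :=
  ((hφ.restrict V).of_measure_le_smul hC hmap).comp_of_map hg.aemeasurable

variable (p : ℝ≥0∞) [Fact (1 ≤ p)] {E : Type*} [NormedAddCommGroup E] [NormedSpace ℝ E]

def setIntegralCompLp (hg : Measurable g) (hW : μ W ≠ ⊤) (hC : C ≠ ⊤)
    (hmap : (μ.restrict W).map g ≤ C • ν.restrict V) : Lp E p ν →ₗ[ℝ] E :=
  haveI := isFiniteMeasure_restrict.2 hW
  have hint : ∀ φ : Lp E p ν, Integrable (φ ∘ g) (μ.restrict W) := fun φ =>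
    (memLp_comp_of_map_restrict_le (Lp.memLp φ) hg hC hmap).integrable Fact.out
  have hcongr : ∀ {φ ψ : Y → E}, φ =ᵐ[ν] ψ → ∫ x in W, φ (g x) ∂μ = ∫ x in W, ψ (g x) ∂μ :=
    fun h => integral_congr_ae
      (Measure.QuasiMeasurePreserving.ae_eq_comp
        ⟨hg, absolutelyContinuous_of_map_restrict_le hmap⟩ h)
  { toFun := fun φ => ∫ x in W, φ (g x) ∂μ
    map_add' := fun φ ψ => by
      rw [hcongr (Lp.coeFn_add φ ψ)]
      exact integral_add (hint φ) (hint ψ)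
    map_smul' := fun c φ => by
      rw [hcongr (Lp.coeFn_smul c φ)]
      exact integral_smul c _ }

end Distortion

lemma map_restrict_le_of_distortion {μ : Measure X} {f : Equiv.Perm X} {W : Set X} {H : ℝ≥0∞}
    (hW : MeasurableSet W) (hWfin : μ W ≠ ⊤) (hHfin : H ≠ ⊤) {k : ℤ}
    (hk : Measurable ⇑(f ^ k)) (hk0 : μ (img f k W) ≠ 0) (hkfin : μ (img f k W) ≠ ⊤)
    (hdist : ∀ B, MeasurableSet B → B ⊆ W → 0 < μ B →
      μ B / μ (img f k B) ≤ H * (μ W / μ (img f k W))) :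
    (μ.restrict W).map ⇑(f ^ k) ≤ (H * (μ W / μ (img f k W))) • μ.restrict (img f k W) := by
  refine map_restrict_le_smul_restrict_image hk hW fun B hBW hB => ?_
  rcases eq_zero_or_pos (μ B) with h0 | hpos
  · simp [h0]
  have hBfin : μ (img f k B) ≠ ⊤ := ne_top_of_le_ne_top hkfin (measure_mono (image_mono hBW))
  exact (ENNReal.div_le_iff_le_mul (Or.inr (mul_ne_top hHfin (div_ne_top hWfin hk0)))
    (Or.inl hBfin)).1 (hdist B hB hBW hpos)

section Norms

variable {α E : Type*} [MeasurableSpace α] [NormedAddCommGroup E] {ν : Measure α} {p : ℝ≥0∞}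

lemma eLpNorm_rpow_toReal_eq_lintegral (hp0 : p ≠ 0) (hp : p ≠ ⊤) (g : α → E) :
    eLpNorm g p ν ^ p.toReal = ∫⁻ x, ‖g x‖ₑ ^ p.toReal ∂ν := by
  rw [eLpNorm_eq_lintegral_rpow_enorm_toReal hp0 hp, ← rpow_mul,
    one_div_mul_cancel (toReal_pos hp0 hp).ne', rpow_one]

lemma enorm_integral_rpow_le [NormedSpace ℝ E] (hp1 : 1 ≤ p) (hp : p ≠ ⊤) {g : α → E}
    (hg : AEStronglyMeasurable g ν) :
    ‖∫ x, g x ∂ν‖ₑ ^ p.toReal ≤ ν univ ^ (p.toReal - 1) * ∫⁻ x, ‖g x‖ₑ ^ p.toReal ∂ν := by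
  have hp0 : p ≠ 0 := (one_pos.trans_le hp1).ne'
  have hq : 0 < p.toReal := toReal_pos hp0 hp
  have hL1 : ‖∫ x, g x ∂ν‖ₑ ≤ eLpNorm g p ν * ν univ ^ (1 - 1 / p.toReal) := by
    calc ‖∫ x, g x ∂ν‖ₑ ≤ eLpNorm g 1 ν :=
          (enorm_integral_le_lintegral_enorm g).trans_eq eLpNorm_one_eq_lintegral_enorm.symm
      _ ≤ _ := by simpa using eLpNorm_le_eLpNorm_mul_rpow_measure_univ hp1 hg
  calc ‖∫ x, g x ∂ν‖ₑ ^ p.toReal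
      ≤ (eLpNorm g p ν * ν univ ^ (1 - 1 / p.toReal)) ^ p.toReal := by gcongr
    _ = ν univ ^ (p.toReal - 1) * ∫⁻ x, ‖g x‖ₑ ^ p.toReal ∂ν := by
      rw [mul_rpow_of_nonneg _ _ hq.le, ← rpow_mul, eLpNorm_rpow_toReal_eq_lintegral hp0 hp,
        mul_comm, sub_mul, one_div_mul_cancel hq.ne', one_mul]

lemma Lp.lintegral_enorm_rpow_eq [Fact (1 ≤ p)] (hp : p ≠ ⊤) (φ : Lp E p ν) :
    ∫⁻ x, ‖φ x‖ₑ ^ p.toReal ∂ν = ‖φ‖ₑ ^ p.toReal := by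
  rw [Lp.enorm_def, eLpNorm_rpow_toReal_eq_lintegral (one_pos.trans_le Fact.out).ne' hp]

lemma lp.enorm_rpow_eq_tsum {ι : Type*} {E : ι → Type*} [∀ i, NormedAddCommGroup (E i)]
    [Fact (1 ≤ p)] (hp : 0 < p.toReal) (x : lp E p) :
    ‖x‖ₑ ^ p.toReal = ∑' i, ‖x i‖ₑ ^ p.toReal := by
  rw [← ofReal_norm x, ofReal_rpow_of_nonneg (norm_nonneg _) hp.le, lp.norm_rpow_eq_tsum hp,
    ofReal_tsum_of_nonneg (fun i => by positivity) ((lp.memℓp x).summable hp)]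
  exact tsum_congr fun i => by rw [← ofReal_norm, ofReal_rpow_of_nonneg (norm_nonneg _) hp.le]

lemma memℓp_of_tsum_enorm_rpow_ne_top {ι : Type*} {E : ι → Type*} [∀ i, NormedAddCommGroup (E i)]
    {a : ∀ i, E i} (h : ∑' i, ‖a i‖ₑ ^ p.toReal ≠ ⊤) : Memℓp a p :=
  memℓp_gen (by simpa only [← toReal_rpow, toReal_enorm] using ENNReal.summable_toReal h)

end Norms

lemma exists_measurable_eq_on_partition {ι β : Type*} [Countable ι] [MeasurableSpace ι]
    [MeasurableSingletonClass ι] [MeasurableSpace β] {s : ι → Set X}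
    (hs : ∀ i, MeasurableSet (s i)) (hdisj : Pairwise (Disjoint on s)) (hcover : ⋃ i, s i = univ)
    (v : ι → β) : ∃ g : X → β, Measurable g ∧ ∀ i, ∀ y ∈ s i, g y = v i := by
  choose e he using fun y => mem_iUnion.1 (hcover.symm ▸ mem_univ y : y ∈ ⋃ i, s i)
  have huniq : ∀ {i y}, y ∈ s i → e y = i := fun {i y} hy =>
    by_contra fun hne => disjoint_left.1 (hdisj hne) (he y) hy
  refine ⟨v ∘ e, (measurable_of_countable v).comp (measurable_to_countable' fun i => ?_),
    fun i y hy => by simp [huniq hy]⟩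
  convert hs i using 1
  ext y
  exact ⟨fun h => (show e y = i from h) ▸ he y, huniq⟩

section WeightedShift

variable {ι 𝕜 : Type*} [NormedField 𝕜] {p : ℝ≥0∞}

lemma norm_mul_rpow_le_of_norm_le (hp : 0 < p.toReal) {u : ι → 𝕜} {b : ℝ} (hu : ∀ n, ‖u n‖ ≤ b)
    (y : ι → 𝕜) (n : ι) : ‖u n * y n‖ ^ p.toReal ≤ b ^ p.toReal * ‖y n‖ ^ p.toReal := by
  rw [norm_mul, ← Real.mul_rpow ((norm_nonneg _).trans (hu n)) (norm_nonneg _)]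
  gcongr
  exact hu n

lemma summable_norm_comp_equiv_rpow (hp : 0 < p.toReal) (σ : ι ≃ ι) (x : lp (fun _ : ι => 𝕜) p) :
    Summable fun n => ‖x (σ n)‖ ^ p.toReal :=
  (σ.summable_iff (f := fun m => ‖x m‖ ^ p.toReal)).2 ((lp.memℓp x).summable hp)

lemma memℓp_mul_comp_equiv (hp : 0 < p.toReal) {u : ι → 𝕜} {b : ℝ} (hu : ∀ n, ‖u n‖ ≤ b)
    (σ : ι ≃ ι) (x : lp (fun _ : ι => 𝕜) p) : Memℓp (fun n => u n * x (σ n)) p :=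
  memℓp_gen <| .of_nonneg_of_le (fun n => by positivity) (norm_mul_rpow_le_of_norm_le hp hu (x ∘ σ))
    ((summable_norm_comp_equiv_rpow hp σ x).mul_left _)

lemma tsum_norm_mul_comp_equiv_rpow_le [Fact (1 ≤ p)] (hp : 0 < p.toReal) {u : ι → 𝕜} {b : ℝ}
    (hb : 0 ≤ b) (hu : ∀ n, ‖u n‖ ≤ b) (σ : ι ≃ ι) (x : lp (fun _ : ι => 𝕜) p) :
    ∑' n, ‖u n * x (σ n)‖ ^ p.toReal ≤ (b * ‖x‖) ^ p.toReal := by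
  calc ∑' n, ‖u n * x (σ n)‖ ^ p.toReal ≤ ∑' n, b ^ p.toReal * ‖x (σ n)‖ ^ p.toReal :=
        Summable.tsum_le_tsum (norm_mul_rpow_le_of_norm_le hp hu (x ∘ σ))
          ((memℓp_mul_comp_equiv hp hu σ x).summable hp)
          ((summable_norm_comp_equiv_rpow hp σ x).mul_left _)
    _ = (b * ‖x‖) ^ p.toReal := by
      rw [tsum_mul_left, σ.tsum_eq (fun m => ‖x m‖ ^ p.toReal), ← lp.norm_rpow_eq_tsum hp,
        Real.mul_rpow hb (norm_nonneg _)]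

def lp.weightedComp [Fact (1 ≤ p)] (hp : 0 < p.toReal) (u : ι → 𝕜) {b : ℝ} (hb : 0 ≤ b)
    (hu : ∀ n, ‖u n‖ ≤ b) (σ : ι ≃ ι) : lp (fun _ : ι => 𝕜) p →L[𝕜] lp (fun _ : ι => 𝕜) p :=
  LinearMap.mkContinuous
    { toFun := fun x => ⟨fun n => u n * x (σ n), memℓp_mul_comp_equiv hp hu σ x⟩
      map_add' := fun _ _ => lp.ext <| funext fun _ => mul_add _ _ _
      map_smul' := fun _ _ => lp.ext <| funext fun _ => mul_left_comm _ _ _ }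
    b fun x => lp.norm_le_of_tsum_le hp (mul_nonneg hb (norm_nonneg x))
      (tsum_norm_mul_comp_equiv_rpow_le hp hb hu σ x)

@[simp]
lemma lp.weightedComp_apply [Fact (1 ≤ p)] (hp : 0 < p.toReal) (u : ι → 𝕜) {b : ℝ}
    (hb : 0 ≤ b) (hu : ∀ n, ‖u n‖ ≤ b) (σ : ι ≃ ι) (x : lp (fun _ : ι => 𝕜) p) (n : ι) :
    lp.weightedComp hp u hb hu σ x n = u n * x (σ n) :=
  rfl

def weightedBackwardShift [Fact (1 ≤ p)] (hp : 0 < p.toReal) (w : ℤ → 𝕜) {a b : ℝ}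
    (ha : 0 < a) (hw : ∀ n, a ≤ ‖w n‖ ∧ ‖w n‖ ≤ b) :
    lp (fun _ : ℤ => 𝕜) p ≃L[𝕜] lp (fun _ : ℤ => 𝕜) p :=
  have hw0 : ∀ n, w n ≠ 0 := fun n => norm_pos_iff.1 (ha.trans_le (hw n).1)
  ContinuousLinearEquiv.equivOfInverse
    (lp.weightedComp hp (fun n => w (n + 1)) ((norm_nonneg _).trans (hw 0).2)
      (fun n => (hw (n + 1)).2) (Equiv.addRight 1))
    (lp.weightedComp hp (fun n => (w n)⁻¹) (inv_nonneg.2 ha.le)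
      (fun n => by rw [norm_inv]; exact inv_anti₀ ha (hw n).1) (Equiv.subRight 1))
    (fun x => lp.ext <| funext fun _ => by simp [hw0])
    (fun x => lp.ext <| funext fun _ => by simp [hw0])

end WeightedShift

section FactorMap

variable {μ : Measure X} {f : Equiv.Perm X} {W : Set X} {p : ℝ≥0∞}

def factorCoeff (μ : Measure X) (f : Equiv.Perm X) (W : Set X) (p : ℝ≥0∞) (k : ℤ) : ℝ :=
  (μ (img f k W)).toReal ^ (1 / p.toReal) / (μ W).toReal

lemma enorm_factorCoeff_rpow (hp : 0 < p.toReal) (hW0 : μ W ≠ 0) (hWfin : μ W ≠ ⊤) {k : ℤ}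
    (hkfin : μ (img f k W) ≠ ⊤) :
    ‖factorCoeff μ f W p k‖ₑ ^ p.toReal = μ (img f k W) / μ W ^ p.toReal := by
  have hc : ‖factorCoeff μ f W p k‖ₑ = μ (img f k W) ^ (1 / p.toReal) / μ W := by
    rw [factorCoeff, ← ofReal_norm, Real.norm_of_nonneg (by positivity),
      ofReal_div_of_pos (toReal_pos hW0 hWfin),
      ← ofReal_rpow_of_nonneg toReal_nonneg (by positivity),
      ofReal_toReal hkfin, ofReal_toReal hWfin]
  rw [hc, div_rpow_of_nonneg _ _ hp.le, ← rpow_mul, one_div_mul_cancel hp.ne', rpow_one]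

lemma factorCoeff_pos (hW0 : μ W ≠ 0) (hWfin : μ W ≠ ⊤) {k : ℤ} (hk0 : μ (img f k W) ≠ 0)
    (hkfin : μ (img f k W) ≠ ⊤) : 0 < factorCoeff μ f W p k :=
  div_pos (Real.rpow_pos_of_pos (toReal_pos hk0 hkfin) _) (toReal_pos hW0 hWfin)

lemma enorm_div_factorCoeff_mul_rpow_mul (hp : 0 < p.toReal) (hW0 : μ W ≠ 0) (hWfin : μ W ≠ ⊤)
    {k : ℤ} (hk0 : μ (img f k W) ≠ 0) (hkfin : μ (img f k W) ≠ ⊤) (t : ℝ) :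
    ‖t / (factorCoeff μ f W p k * (μ W).toReal)‖ₑ ^ p.toReal * μ (img f k W) =
      ‖t‖ₑ ^ p.toReal := by
  have hd : ‖factorCoeff μ f W p k * (μ W).toReal‖ₑ ^ p.toReal = μ (img f k W) := by
    rw [enorm_mul, mul_rpow_of_nonneg _ _ hp.le, enorm_factorCoeff_rpow hp hW0 hWfin hkfin,
      Real.enorm_of_nonneg toReal_nonneg, ofReal_toReal hWfin, ENNReal.div_mul_cancel
      (rpow_pos (pos_iff_ne_zero.2 hW0) hWfin).ne' (rpow_ne_top_of_nonneg hp.le hWfin)]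
  rw [div_eq_mul_inv, enorm_mul, enorm_inv (mul_pos (factorCoeff_pos hW0 hWfin hk0 hkfin)
      (toReal_pos hW0 hWfin)).ne', mul_rpow_of_nonneg _ _ hp.le, inv_rpow, hd, mul_assoc,
    ENNReal.inv_mul_cancel hk0 hkfin, mul_one]

lemma enorm_factorCoeff_mul_setIntegral_rpow_le [Fact (1 ≤ p)] (hp : p ≠ ⊤) {H : ℝ≥0∞} {k : ℤ}
    (hk : Measurable ⇑(f ^ k)) (hW0 : μ W ≠ 0) (hWfin : μ W ≠ ⊤) (hk0 : μ (img f k W) ≠ 0)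
    (hkfin : μ (img f k W) ≠ ⊤)
    (hmap : (μ.restrict W).map ⇑(f ^ k) ≤ (H * (μ W / μ (img f k W))) • μ.restrict (img f k W))
    {φ : X → ℝ} (hφ : AEStronglyMeasurable φ μ) :
    ‖factorCoeff μ f W p k * ∫ x in W, φ ((f ^ k) x) ∂μ‖ₑ ^ p.toReal ≤
      H * ∫⁻ y in img f k W, ‖φ y‖ₑ ^ p.toReal ∂μ := by
  have hp1 : 1 ≤ p := Fact.out
  have hq : 0 < p.toReal := toReal_pos (one_pos.trans_le hp1).ne' hp
  have hJensen :=
    enorm_integral_rpow_le hp1 hp (aestronglyMeasurable_comp_of_map_restrict_le hφ hk hmap)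
  have hDist := setLIntegral_comp_le_of_map_restrict_le hk hmap (hφ.enorm.pow_const p.toReal)
  rw [Measure.restrict_apply_univ] at hJensen
  rw [enorm_mul, mul_rpow_of_nonneg _ _ hq.le, enorm_factorCoeff_rpow hq hW0 hWfin hkfin]
  set L := ∫⁻ y in img f k W, ‖φ y‖ₑ ^ p.toReal ∂μ
  calc μ (img f k W) / μ W ^ p.toReal * ‖∫ x in W, φ ((f ^ k) x) ∂μ‖ₑ ^ p.toReal
      ≤ μ (img f k W) / μ W ^ p.toReal *
          (μ W ^ (p.toReal - 1) * (H * (μ W / μ (img f k W)) * L)) := by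
        gcongr
        exact hJensen.trans (by gcongr; exact hDist)
    _ = H * L * ((μ (img f k W) * (μ (img f k W))⁻¹) * (μ W ^ p.toReal * (μ W ^ p.toReal)⁻¹) *
          (μ W * (μ W)⁻¹)) := by
        rw [rpow_sub _ _ hW0 hWfin, rpow_one]
        simp only [div_eq_mul_inv]
        ring
    _ = H * L := by
        rw [ENNReal.mul_inv_cancel hk0 hkfin, ENNReal.mul_inv_cancel hW0 hWfin,
          ENNReal.mul_inv_cancel (rpow_pos (pos_iff_ne_zero.2 hW0) hWfin).ne'
            (rpow_ne_top_of_nonneg hq.le hWfin)]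
        simp

lemma tsum_setLIntegral_img (hdiss : IsDissipative μ f W) (F : X → ℝ≥0∞) :
    ∑' k, ∫⁻ y in img f k W, F y ∂μ = ∫⁻ y, F y ∂μ := by
  rw [← lintegral_iUnion (fun k => measurableSet_img hdiss.meas_f hdiss.meas_symm k hdiss.meas_W)
    hdiss.disj, hdiss.cover, Measure.restrict_univ]

lemma tsum_enorm_factorCoeff_mul_setIntegral_rpow_le [Fact (1 ≤ p)] (hp : p ≠ ⊤)
    (hdiss : IsDissipative μ f W) {H : ℝ≥0∞} (hk0 : ∀ k, μ (img f k W) ≠ 0)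
    (hkfin : ∀ k, μ (img f k W) ≠ ⊤)
    (hmap : ∀ k, (μ.restrict W).map ⇑(f ^ k) ≤
      (H * (μ W / μ (img f k W))) • μ.restrict (img f k W)) (φ : Lp ℝ p μ) :
    ∑' k, ‖factorCoeff μ f W p k * ∫ x in W, φ ((f ^ k) x) ∂μ‖ₑ ^ p.toReal ≤
      H * ‖φ‖ₑ ^ p.toReal :=
  calc _ ≤ ∑' k, H * ∫⁻ y in img f k W, ‖φ y‖ₑ ^ p.toReal ∂μ :=
        ENNReal.tsum_le_tsum fun k => enorm_factorCoeff_mul_setIntegral_rpow_le hp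
          (measurable_perm_zpow hdiss.meas_f hdiss.meas_symm k) hdiss.pos.ne' hdiss.fin.ne
          (hk0 k) (hkfin k) (hmap k) (Lp.aestronglyMeasurable φ)
    _ = H * ‖φ‖ₑ ^ p.toReal := by
        rw [ENNReal.tsum_mul_left, tsum_setLIntegral_img hdiss, Lp.lintegral_enorm_rpow_eq hp]

theorem exists_factorMap [Fact (1 ≤ p)] (hp : p ≠ ⊤) (hdiss : IsDissipative μ f W)
    {H : ℝ≥0∞} (hHfin : H ≠ ⊤) (hk0 : ∀ k, μ (img f k W) ≠ 0) (hkfin : ∀ k, μ (img f k W) ≠ ⊤)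
    (hmap : ∀ k, (μ.restrict W).map ⇑(f ^ k) ≤
      (H * (μ W / μ (img f k W))) • μ.restrict (img f k W)) :
    ∃ Pi : Lp ℝ p μ →L[ℝ] lp (fun _ : ℤ => ℝ) p, ‖Pi‖ ≤ H.toReal ^ (1 / p.toReal) ∧
      ∀ φ k, Pi φ k = factorCoeff μ f W p k * ∫ x in W, φ ((f ^ k) x) ∂μ := by
  have hq : 0 < p.toReal := toReal_pos (one_pos.trans_le Fact.out).ne' hp
  have hbound : ∀ φ : Lp ℝ p μ,
      ∑' k, ‖factorCoeff μ f W p k * ∫ x in W, φ ((f ^ k) x) ∂μ‖ₑ ^ p.toReal ≤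
        (H ^ (1 / p.toReal) * ‖φ‖ₑ) ^ p.toReal := fun φ =>
    (tsum_enorm_factorCoeff_mul_setIntegral_rpow_le hp hdiss hk0 hkfin hmap φ).trans_eq <| by
      rw [mul_rpow_of_nonneg _ _ hq.le, ← rpow_mul, one_div_mul_cancel hq.ne', rpow_one]
  have hmem : ∀ φ : Lp ℝ p μ,
      Memℓp (fun k => factorCoeff μ f W p k * ∫ x in W, φ ((f ^ k) x) ∂μ) p := fun φ =>
    memℓp_of_tsum_enorm_rpow_ne_top <| ne_top_of_le_ne_top (rpow_ne_top_of_nonneg hq.le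
      (mul_ne_top (rpow_ne_top_of_nonneg (by positivity) hHfin) enorm_ne_top)) (hbound φ)
  let I : ℤ → Lp ℝ p μ →ₗ[ℝ] ℝ := fun k =>
    setIntegralCompLp p (measurable_perm_zpow hdiss.meas_f hdiss.meas_symm k) hdiss.fin.ne
      (mul_ne_top hHfin (div_ne_top hdiss.fin.ne (hk0 k))) (hmap k)
  let L : Lp ℝ p μ →ₗ[ℝ] lp (fun _ : ℤ => ℝ) p :=
    { toFun := fun φ => ⟨fun k => factorCoeff μ f W p k * I k φ, hmem φ⟩
      map_add' := fun φ ψ => lp.ext <| funext fun k =>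
        (congrArg (factorCoeff μ f W p k * ·) ((I k).map_add φ ψ)).trans (mul_add _ _ _)
      map_smul' := fun c φ => lp.ext <| funext fun k =>
        (congrArg (factorCoeff μ f W p k * ·) ((I k).map_smul c φ)).trans
          (mul_left_comm _ _ _) }
  refine ⟨L.mkContinuous (H.toReal ^ (1 / p.toReal)) fun φ => ?_,
    LinearMap.mkContinuous_norm_le _ (by positivity) _, fun φ k => rfl⟩
  have hLφ : ‖L φ‖ₑ ≤ H ^ (1 / p.toReal) * ‖φ‖ₑ :=
    (rpow_le_rpow_iff hq).1 ((lp.enorm_rpow_eq_tsum hq (L φ)).trans_le (hbound φ))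
  simpa only [toReal_enorm, toReal_mul, ← toReal_rpow] using toReal_mono
    (mul_ne_top (rpow_ne_top_of_nonneg (by positivity) hHfin) enorm_ne_top) hLφ

theorem exists_preimage_norm_le [Fact (1 ≤ p)] (hp : p ≠ ⊤) (hdiss : IsDissipative μ f W)
    (hqmp : ∀ k : ℤ, Measure.QuasiMeasurePreserving ⇑(f ^ k) μ μ)
    (hk0 : ∀ k, μ (img f k W) ≠ 0) (hkfin : ∀ k, μ (img f k W) ≠ ⊤)
    (Pi : Lp ℝ p μ → lp (fun _ : ℤ => ℝ) p)
    (hPi : ∀ φ k, Pi φ k = factorCoeff μ f W p k * ∫ x in W, φ ((f ^ k) x) ∂μ)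
    (x : lp (fun _ : ℤ => ℝ) p) : ∃ φ : Lp ℝ p μ, Pi φ = x ∧ ‖φ‖ ≤ ‖x‖ := by
  have hp0 : p ≠ 0 := (one_pos.trans_le Fact.out).ne'
  have hq : 0 < p.toReal := toReal_pos hp0 hp
  have himg := fun k => measurableSet_img hdiss.meas_f hdiss.meas_symm k hdiss.meas_W
  obtain ⟨g, hg, hgk⟩ := exists_measurable_eq_on_partition himg hdiss.disj hdiss.cover
    fun k => x k / (factorCoeff μ f W p k * (μ W).toReal)
  have hnorm : eLpNorm g p μ = ‖x‖ₑ := by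
    have hlint : ∫⁻ y, ‖g y‖ₑ ^ p.toReal ∂μ = ‖x‖ₑ ^ p.toReal := by
      rw [← tsum_setLIntegral_img hdiss, lp.enorm_rpow_eq_tsum hq]
      refine tsum_congr fun k => ?_
      rw [setLIntegral_congr_fun (himg k) fun y hy => by rw [hgk k y hy], setLIntegral_const,
        enorm_div_factorCoeff_mul_rpow_mul hq hdiss.pos.ne' hdiss.fin.ne (hk0 k) (hkfin k)]
    rw [eLpNorm_eq_lintegral_rpow_enorm_toReal hp0 hp, hlint, ← rpow_mul,
      mul_one_div_cancel hq.ne', rpow_one]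
  have hmem : MemLp g p μ := ⟨hg.aestronglyMeasurable, hnorm ▸ enorm_lt_top⟩
  refine ⟨hmem.toLp g, lp.ext <| funext fun k => ?_, by rw [Lp.norm_toLp, hnorm, toReal_enorm]⟩
  have hint : ∫ y in W, (hmem.toLp g : X → ℝ) ((f ^ k) y) ∂μ =
      (μ W).toReal * (x k / (factorCoeff μ f W p k * (μ W).toReal)) :=
    calc _ = ∫ y in W, g ((f ^ k) y) ∂μ :=
          integral_congr_ae (ae_restrict_of_ae ((hqmp k).ae_eq_comp hmem.coeFn_toLp))
      _ = _ := by
          rw [setIntegral_congr_fun hdiss.meas_W fun y hy => hgk k _ (mem_image_of_mem _ hy),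
            setIntegral_const, smul_eq_mul, measureReal_def]
  have hW0 : (μ W).toReal ≠ 0 := (toReal_pos hdiss.pos.ne' hdiss.fin.ne).ne'
  have hck := (factorCoeff_pos hdiss.pos.ne' hdiss.fin.ne (hk0 k) (hkfin k) (p := p)).ne'
  rw [hPi, hint]
  field_simp

lemma wseq_eq (k : ℤ) : wseq μ f W p k =
    ((μ (img f (k - 1) W)).toReal / (μ (img f k W)).toReal) ^ (1 / p.toReal) := by
  rw [wseq, ← toReal_rpow, toReal_div]

lemma wseq_succ_mul_factorCoeff {k : ℤ} (hk0 : μ (img f (k + 1) W) ≠ 0)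
    (hkfin : μ (img f (k + 1) W) ≠ ⊤) :
    wseq μ f W p (k + 1) * factorCoeff μ f W p (k + 1) = factorCoeff μ f W p k := by
  have hpos : 0 < (μ (img f (k + 1) W)).toReal ^ (1 / p.toReal) :=
    Real.rpow_pos_of_pos (toReal_pos hk0 hkfin) _
  rw [wseq_eq, add_sub_cancel_right, Real.div_rpow toReal_nonneg toReal_nonneg, factorCoeff,
    factorCoeff]
  field_simp

theorem exists_bounds_wseq (hs : CondStar μ f) (hs' : CondStar μ f.symm)
    (himg : ∀ k, MeasurableSet (img f k W)) (hk0 : ∀ k, μ (img f k W) ≠ 0)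
    (hkfin : ∀ k, μ (img f k W) ≠ ⊤) :
    ∃ a b : ℝ, 0 < a ∧ ∀ k, a ≤ wseq μ f W p k ∧ wseq μ f W p k ≤ b := by
  obtain ⟨c, -, hct, hc⟩ := hs
  obtain ⟨c', hc'0, hc't, hc'⟩ := hs'
  have hq : 0 ≤ 1 / p.toReal := by positivity
  have hc'inv : c'⁻¹ ≠ ⊤ := inv_ne_top.2 hc'0.ne'
  refine ⟨(c'⁻¹ ^ (1 / p.toReal)).toReal, (c ^ (1 / p.toReal)).toReal,
    toReal_pos (rpow_pos (ENNReal.inv_pos.2 hc't) hc'inv).ne' (rpow_ne_top_of_nonneg hq hc'inv),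
    fun k => ⟨?_, ?_⟩⟩
  · have h : μ (img f k W) ≤ c' * μ (img f (k - 1) W) := by
      simpa only [preimage_symm_img, sub_add_cancel] using hc' _ (himg (k - 1))
    have hr : c'⁻¹ ≤ μ (img f (k - 1) W) / μ (img f k W) := by
      rw [ENNReal.le_div_iff_mul_le (Or.inl (hk0 k)) (Or.inl (hkfin k))]
      calc c'⁻¹ * μ (img f k W) ≤ c'⁻¹ * (c' * μ (img f (k - 1) W)) := by gcongr
        _ = μ (img f (k - 1) W) := by
          rw [← mul_assoc, ENNReal.inv_mul_cancel hc'0.ne' hc't, one_mul]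
    exact toReal_mono (rpow_ne_top_of_nonneg hq (div_ne_top (hkfin _) (hk0 k)))
      (rpow_le_rpow hr hq)
  · have h : μ (img f (k - 1) W) ≤ c * μ (img f k W) := by
      simpa only [preimage_img] using hc _ (himg k)
    have hr : μ (img f (k - 1) W) / μ (img f k W) ≤ c :=
      (ENNReal.div_le_iff_le_mul (Or.inl (hk0 k)) (Or.inl (hkfin k))).2 h
    exact toReal_mono (rpow_ne_top_of_nonneg hq hct) (rpow_le_rpow hr hq)

theorem factorMap_comp_eq_weightedShift [Fact (1 ≤ p)]
    (hqmp : ∀ k : ℤ, Measure.QuasiMeasurePreserving ⇑(f ^ k) μ μ)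
    (hk0 : ∀ k, μ (img f k W) ≠ 0) (hkfin : ∀ k, μ (img f k W) ≠ ⊤)
    {T : Lp ℝ p μ ≃L[ℝ] Lp ℝ p μ} (hT : RepsComp μ p f T)
    (Pi : Lp ℝ p μ → lp (fun _ : ℤ => ℝ) p)
    (hPi : ∀ φ k, Pi φ k = factorCoeff μ f W p k * ∫ x in W, φ ((f ^ k) x) ∂μ)
    (Bw : lp (fun _ : ℤ => ℝ) p → lp (fun _ : ℤ => ℝ) p)
    (hBw : ∀ x n, Bw x n = wseq μ f W p (n + 1) * x (n + 1)) (φ : Lp ℝ p μ) :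
    Pi (T φ) = Bw (Pi φ) := by
  refine lp.ext <| funext fun k => ?_
  have hTk : ∫ x in W, (T φ : X → ℝ) ((f ^ k) x) ∂μ = ∫ x in W, φ ((f ^ (k + 1)) x) ∂μ := by
    refine integral_congr_ae (ae_restrict_of_ae ?_)
    filter_upwards [(hqmp k).ae_eq_comp (hT φ)] with x hx
    rw [perm_zpow_add_one_apply]
    exact hx
  change Pi (T φ) k = Bw (Pi φ) k
  rw [hBw, hPi, hPi, hTk, ← mul_assoc, wseq_succ_mul_factorCoeff (hk0 _) (hkfin _)]

end FactorMap

theorem factor_onto_weighted_shift_general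
    {X : Type*} [MeasurableSpace X] (μ : Measure X) (f : Equiv.Perm X) (W : Set X)
    (p : ℝ≥0∞) [Fact (1 ≤ p)] (hp : p ≠ ⊤)
    (hdiss : IsDissipative μ f W)
    (hstar : CondStar μ f) (hstar' : CondStar μ f.symm)
    (H : ℝ≥0∞) (hHfin : H ≠ ⊤)
    (hgbd : ∀ B : Set X, MeasurableSet B → B ⊆ W → 0 < μ B → ∀ r s : ℤ,
      (1 / H) * (μ (img f (r + s) W) / μ (img f s W)) ≤
          μ (img f (r + s) B) / μ (img f s B) ∧
        μ (img f (r + s) B) / μ (img f s B) ≤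
          H * (μ (img f (r + s) W) / μ (img f s W)))
    (T : Lp ℝ p μ ≃L[ℝ] Lp ℝ p μ) (hT : RepsComp μ p f T) :
    (∃ a b : ℝ, 0 < a ∧ ∀ k : ℤ, a ≤ wseq μ f W p k ∧ wseq μ f W p k ≤ b) ∧
    ∃ (Bw : lp (fun _ : ℤ => ℝ) p ≃L[ℝ] lp (fun _ : ℤ => ℝ) p)
      (Pi : Lp ℝ p μ →L[ℝ] lp (fun _ : ℤ => ℝ) p),
      (∀ (x : lp (fun _ : ℤ => ℝ) p) (n : ℤ), Bw x n = wseq μ f W p (n + 1) * x (n + 1)) ∧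
      Function.Surjective Pi ∧
      ‖Pi‖ ≤ H.toReal ^ (1 / p.toReal) ∧
      (∀ (φ : Lp ℝ p μ) (k : ℤ),
        Pi φ k = (μ (img f k W)).toReal ^ (1 / p.toReal) / (μ W).toReal *
          ∫ x in W, (φ : X → ℝ) ((f ^ k) x) ∂μ) ∧
      (∀ φ : Lp ℝ p μ, Pi (T φ) = Bw (Pi φ)) ∧
      (∀ x : lp (fun _ : ℤ => ℝ) p, ∃ φ : Lp ℝ p μ, Pi φ = x ∧ ‖φ‖ ≤ 1 * ‖x‖) := by
  have hq : 0 < p.toReal := toReal_pos (one_pos.trans_le Fact.out).ne' hp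
  have hmeas := measurable_perm_zpow hdiss.meas_f hdiss.meas_symm
  have hstar_k := condStar_perm_zpow hdiss.meas_f hdiss.meas_symm hstar hstar'
  have hqmp : ∀ k : ℤ, Measure.QuasiMeasurePreserving ⇑(f ^ k) μ μ := fun k =>
    (hstar_k k).quasiMeasurePreserving (hmeas k)
  have hk0 : ∀ k, μ (img f k W) ≠ 0 := fun k => measure_img_ne_zero (hqmp k) hdiss.pos.ne'
  have hkfin : ∀ k, μ (img f k W) ≠ ⊤ := fun k =>
    measure_img_ne_top (hstar_k (-k)) hdiss.meas_W hdiss.fin.ne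
  have hmap := fun k => map_restrict_le_of_distortion hdiss.meas_W hdiss.fin.ne hHfin (hmeas k)
    (hk0 k) (hkfin k) fun B hB hBW hB0 => by simpa [img] using (hgbd B hB hBW hB0 (-k) k).2
  obtain ⟨a, b, ha, hw⟩ := exists_bounds_wseq (p := p) hstar hstar'
    (fun k => measurableSet_img hdiss.meas_f hdiss.meas_symm k hdiss.meas_W) hk0 hkfin
  obtain ⟨Pi, hPi_norm, hPi⟩ := exists_factorMap hp hdiss hHfin hk0 hkfin hmap
  have hsel := exists_preimage_norm_le hp hdiss hqmp hk0 hkfin Pi hPi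
  let Bw := weightedBackwardShift hq (wseq μ f W p) ha fun n => by
    rw [Real.norm_of_nonneg (ha.le.trans (hw n).1)]
    exact hw n
  refine ⟨⟨a, b, ha, hw⟩, Bw, Pi, fun x n => rfl, fun x => (hsel x).imp fun _ h => h.1, hPi_norm,
    hPi, factorMap_comp_eq_weightedShift hqmp hk0 hkfin hT Pi hPi Bw fun x n => rfl,
    fun x => (hsel x).imp fun _ h => ⟨h.1, (one_mul ‖x‖).symm ▸ h.2⟩⟩

/-- Lemma `factorBw`: the weighted backward shift `B_w` on `ℓ^p(ℤ)`
with weights `w_k = (μ(f^{k-1}(W))/μ(f^k(W)))^{1/p}` is a well-defined invertible operator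
and is a factor of `T_f` via a factor map `Π` of norm at most `H^{1/p}` that admits a
bounded selector with constant `L = 1`. -/
theorem factor_onto_weighted_shift
    {X : Type*} [MeasurableSpace X] (μ : Measure X) (f : Equiv.Perm X) (W : Set X)
    (p : ℝ≥0∞) [Fact (1 ≤ p)] (hp : p ≠ ⊤)
    (hdiss : IsDissipative μ f W)
    (K : ℝ≥0∞) (hK0 : 0 < K) (hKfin : K ≠ ⊤)
    (hbd : BoundedDistortion μ f W K)
    (hstar : CondStar μ f) (hstar' : CondStar μ f.symm)
    (H : ℝ≥0∞) (hH0 : 0 < H) (hHfin : H ≠ ⊤)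
    (hgbd : ∀ B : Set X, MeasurableSet B → B ⊆ W → 0 < μ B → ∀ r s : ℤ,
      (1 / H) * (μ (img f (r + s) W) / μ (img f s W)) ≤
          μ (img f (r + s) B) / μ (img f s B) ∧
        μ (img f (r + s) B) / μ (img f s B) ≤
          H * (μ (img f (r + s) W) / μ (img f s W)))
    (T : Lp ℝ p μ ≃L[ℝ] Lp ℝ p μ) (hT : RepsComp μ p f T) :
    (∃ a b : ℝ, 0 < a ∧ ∀ k : ℤ, a ≤ wseq μ f W p k ∧ wseq μ f W p k ≤ b) ∧
    ∃ (Bw : lp (fun _ : ℤ => ℝ) p ≃L[ℝ] lp (fun _ : ℤ => ℝ) p)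
      (Pi : Lp ℝ p μ →L[ℝ] lp (fun _ : ℤ => ℝ) p),
      (∀ (x : lp (fun _ : ℤ => ℝ) p) (n : ℤ), Bw x n = wseq μ f W p (n + 1) * x (n + 1)) ∧
      Function.Surjective Pi ∧
      ‖Pi‖ ≤ H.toReal ^ (1 / p.toReal) ∧
      (∀ (φ : Lp ℝ p μ) (k : ℤ),
        Pi φ k = (μ (img f k W)).toReal ^ (1 / p.toReal) / (μ W).toReal *
          ∫ x in W, (φ : X → ℝ) ((f ^ k) x) ∂μ) ∧
      (∀ φ : Lp ℝ p μ, Pi (T φ) = Bw (Pi φ)) ∧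
      (∀ x : lp (fun _ : ℤ => ℝ) p, ∃ φ : Lp ℝ p μ, Pi φ = x ∧ ‖φ‖ ≤ 1 * ‖x‖) :=
  factor_onto_weighted_shift_general μ f W p hp hdiss hstar hstar' H hHfin hgbd T hT

end GHShadow
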